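/- Let p₁,…,pₙ and q₁,…,qₘ be in ℝ^d with strictly positive λᵢ, μⱼ satisfying ∑ᵢ λᵢ p̂ᵢ p̂ᵢᵀ = ∑ⱼ μⱼ q̂ⱼ q̂ⱼᵀ. Then the affine span of {p₁,…,pₙ} equals the affine span of {q₁,…,qₘ}. -/

import Mathlib

open Matrix BigOperators

/-- The lift of a point in `ℝ^d` to `ℝ^(d+1)` obtained by appending a `1`. -/
def hat {d : ℕ} (x : Fin d → ℝ) : Fin (d + 1) → ℝ := Fin.snoc x 1

lemma quad_eval {D : ℕ} (a v : Fin D → ℝ) :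
    v ⬝ᵥ (vecMulVec a a *ᵥ v) = (a ⬝ᵥ v) ^ 2 := by
  simp [dotProduct, mulVec, vecMulVec_apply, Finset.mul_sum, Finset.sum_mul, sq]
  rw [Finset.sum_comm]
  congr 1; ext k; congr 1; ext l; ring

lemma quad_sum {D N : ℕ} (lam : Fin N → ℝ) (a : Fin N → Fin D → ℝ) (v : Fin D → ℝ) :
    v ⬝ᵥ ((∑ i, lam i • vecMulVec (a i) (a i)) *ᵥ v) = ∑ i, lam i * (a i ⬝ᵥ v) ^ 2 := by
  have h : (∑ i, lam i • vecMulVec (a i) (a i)) *ᵥ v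
      = ∑ i, lam i • (vecMulVec (a i) (a i) *ᵥ v) := by
    ext k
    simp [mulVec, dotProduct, Matrix.sum_apply, Finset.sum_mul, Finset.sum_apply, Finset.mul_sum]
    rw [Finset.sum_comm]
    exact Finset.sum_congr rfl fun x _ => Finset.sum_congr rfl fun i _ => by ring
  rw [h]
  simp only [dotProduct, Finset.sum_apply, Pi.smul_apply, smul_eq_mul, Finset.mul_sum]
  rw [Finset.sum_comm]
  refine Finset.sum_congr rfl fun i _ => ?_
  have := quad_eval (a i) v
  simp [dotProduct, mulVec] at this ⊢
  rw [← this, Finset.mul_sum]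
  exact Finset.sum_congr rfl fun k _ => by ring


lemma hat_mem_span {d n m : ℕ} (p : Fin n → Fin d → ℝ) (q : Fin m → Fin d → ℝ)
    (lam : Fin n → ℝ) (mu : Fin m → ℝ) (hlam : ∀ i, 0 < lam i)
    (heq : ∑ i, lam i • vecMulVec (hat (p i)) (hat (p i))
         = ∑ j, mu j • vecMulVec (hat (q j)) (hat (q j))) (i : Fin n) :
    (hat (p i)) ∈ Submodule.span ℝ (Set.range fun j => hat (q j)) := by
  let E := EuclideanSpace ℝ (Fin (d + 1))
  let ph : Fin n → E := fun i => (WithLp.equiv 2 _).symm (hat (p i))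
  let qh : Fin m → E := fun j => (WithLp.equiv 2 _).symm (hat (q j))
  let W : Submodule ℝ E := Submodule.span ℝ (Set.range qh)
  suffices h : ph i ∈ Wᗮᗮ by
    rw [Submodule.orthogonal_orthogonal] at h
    have h2 := Submodule.apply_mem_span_image_of_mem_span
      (WithLp.linearEquiv 2 ℝ (Fin (d + 1) → ℝ)).toLinearMap h
    rw [← Set.range_comp] at h2
    exact h2
  rw [Submodule.mem_orthogonal]
  intro v hv
  have hq : ∀ j, hat (q j) ⬝ᵥ ((WithLp.equiv 2 _) v) = 0 := by
    intro j
    have := (Submodule.mem_orthogonal W v).mp hv (qh j)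
      (Submodule.subset_span ⟨j, rfl⟩)
    rw [PiLp.inner_apply] at this
    simpa [qh, dotProduct, PiLp.inner_apply, RCLike.inner_apply, WithLp.equiv, mul_comm] using this
  have key : ∑ i, lam i * (hat (p i) ⬝ᵥ ((WithLp.equiv 2 _) v)) ^ 2 = 0 := by
    rw [← quad_sum, heq, quad_sum]
    exact Finset.sum_eq_zero fun j _ => by rw [hq j]; ring
  have hz : hat (p i) ⬝ᵥ ((WithLp.equiv 2 _) v) = 0 := by
    have hnn : ∀ k ∈ Finset.univ, 0 ≤ lam k * (hat (p k) ⬝ᵥ ((WithLp.equiv 2 _) v)) ^ 2 :=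
      fun k _ => mul_nonneg (hlam k).le (sq_nonneg _)
    have h1 := (Finset.sum_eq_zero_iff_of_nonneg hnn).mp key i (Finset.mem_univ i)
    have h2 : (hat (p i) ⬝ᵥ ((WithLp.equiv 2 _) v)) ^ 2 = 0 := by
      rcases mul_eq_zero.mp h1 with h | h
      · exact absurd h (hlam i).ne'
      · exact h
    exact pow_eq_zero_iff (by norm_num) |>.mp h2
  show (inner ℝ v (ph i) : ℝ) = 0
  rw [real_inner_comm, PiLp.inner_apply]
  simpa [ph, dotProduct, PiLp.inner_apply, RCLike.inner_apply, WithLp.equiv, mul_comm] using hz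

lemma mem_affineSpan_of_hat {d m : ℕ} (q : Fin m → Fin d → ℝ) (x : Fin d → ℝ)
    (h : hat x ∈ Submodule.span ℝ (Set.range fun j => hat (q j))) :
    x ∈ affineSpan ℝ (Set.range q) := by
  rw [Submodule.mem_span_range_iff_exists_fun] at h
  obtain ⟨c, hc⟩ := h
  have hlast : ∑ j, c j = 1 := by
    have := congrFun hc (Fin.last d)
    simpa [hat, Finset.sum_apply, Fin.snoc_last] using this
  have hx : ∑ j, c j • q j = x := by
    ext k
    have := congrFun hc (Fin.castSucc k)
    simpa [hat, Finset.sum_apply, Fin.snoc_castSucc] using this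
  have := affineCombination_mem_affineSpan (s := Finset.univ) (w := c) hlast q
  rwa [Finset.affineCombination_eq_linear_combination _ _ _ hlast, hx] at this

theorem stmt14 {d n m : ℕ} (p : Fin n → Fin d → ℝ) (q : Fin m → Fin d → ℝ)
    (lam : Fin n → ℝ) (mu : Fin m → ℝ)
    (hlam : ∀ i, 0 < lam i) (hmu : ∀ j, 0 < mu j)
    (heq : ∑ i, lam i • vecMulVec (hat (p i)) (hat (p i))
         = ∑ j, mu j • vecMulVec (hat (q j)) (hat (q j))) :
    affineSpan ℝ (Set.range p) = affineSpan ℝ (Set.range q) := by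
  apply le_antisymm
  · rw [affineSpan_le]
    rintro _ ⟨i, rfl⟩
    exact mem_affineSpan_of_hat q (p i) (hat_mem_span p q lam mu hlam heq i)
  · rw [affineSpan_le]
    rintro _ ⟨j, rfl⟩
    exact mem_affineSpan_of_hat p (q j) (hat_mem_span q p mu lam hmu heq.symm j)
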